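/- The set of solutions (p2, p3, p4, p5, p6, p15, p20, p30, p60, p10, p12, p41, p43, p45, p119) ∈ ℚ^15 with all coordinates nonzero of the system p41 = p10^3·p12, p43 = p10^2·p12^2, p45 = p10·p12^3, p119 = p41·p43·p10^2·p12^3, p119 = p10^12, p119 = p12^10, p119 = p2^60, p119 = p3^40, p119 = p4^30, p119 = p5^20, p119 = p6^20, p119 = p15^8, p119 = p20^6, p119 = p30^4, p119 = p60^2 forms, under componentwise multiplication, a group of order exactly 1024 in which every element squares to the identity; hence it is isomorphic to (ℤ/2ℤ)^10. -/
import Mathlib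

private def e' (x : ZMod 2) : ℚˣ := if x = 0 then 1 else -1

private lemma zc (x : ZMod 2) : x = 0 ∨ x = 1 := by revert x; decide

private lemma zadd (x : ZMod 2) : x + x = 0 := by revert x; decide

private lemma e'_add (x y : ZMod 2) : e' (x + y) = e' x * e' y := by
  rcases zc x with h | h <;> rcases zc y with h' | h' <;> subst h <;> subst h' <;>
    simp [e', show (1 + 1 : ZMod 2) = 0 by decide]

private lemma e'_sq (x : ZMod 2) : e' x ^ 2 = 1 := by
  rcases zc x with h | h <;> subst h <;> simp [e']

private lemma e'_cube (x : ZMod 2) : e' x ^ 3 = e' x := by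
  rw [show (3:ℕ) = 2 + 1 from rfl, pow_add, e'_sq, one_mul, pow_one]

private lemma e'_pow_even (x : ZMod 2) (n : ℕ) : e' x ^ (2 * n) = 1 := by
  rw [pow_mul, e'_sq, one_pow]

private lemma e'_inj (x y : ZMod 2) (h : e' x = e' y) : x = y := by
  rcases zc x with h1 | h1 <;> rcases zc y with h2 | h2 <;> subst h1 <;> subst h2 <;>
    simp_all [e']

private def gg (u : ℚˣ) : ZMod 2 := if u = 1 then 0 else 1

private lemma e'_gg {u : ℚˣ} (h : u = 1 ∨ u = -1) : e' (gg u) = u := by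
  rcases h with h | h <;> subst h <;> simp [gg, e']

private def E (v : Fin 10 → ZMod 2) : Fin 15 → ℚˣ :=
  ![e' (v 0), e' (v 1), e' (v 2), e' (v 3), e' (v 4), e' (v 5), e' (v 6), e' (v 7), e' (v 8),
    1, e' (v 9), e' (v 9), 1, e' (v 9), 1]

private def f : Multiplicative (Fin 10 → ZMod 2) →* (Fin 15 → ℚˣ) where
  toFun v := E (Multiplicative.toAdd v)
  map_one' := by
    funext i; fin_cases i <;> rfl
  map_mul' v w := by
    funext i
    fin_cases i <;> first | exact e'_add _ _ | exact (one_mul 1).symm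

private lemma f_inj : Function.Injective f := by
  intro v w h
  have key : Multiplicative.toAdd v = Multiplicative.toAdd w := by
    funext j
    fin_cases j
    · exact e'_inj _ _ (congrFun h 0)
    · exact e'_inj _ _ (congrFun h 1)
    · exact e'_inj _ _ (congrFun h 2)
    · exact e'_inj _ _ (congrFun h 3)
    · exact e'_inj _ _ (congrFun h 4)
    · exact e'_inj _ _ (congrFun h 5)
    · exact e'_inj _ _ (congrFun h 6)
    · exact e'_inj _ _ (congrFun h 7)
    · exact e'_inj _ _ (congrFun h 8)
    · exact e'_inj _ _ (congrFun h 10)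
  exact Multiplicative.toAdd.injective key

private lemma pm_of_pow (u : ℚˣ) (n : ℕ) (hn : n ≠ 0) (h : u ^ n = 1) : u = 1 ∨ u = -1 := by
  have hq : (u : ℚ) ^ n = 1 := by
    have := congrArg Units.val h
    simpa using this
  rcases pow_eq_one_iff_cases.mp hq with h0 | h1 | ⟨h2, _⟩
  · exact absurd h0 hn
  · exact Or.inl (Units.ext (by simpa using h1))
  · exact Or.inr (Units.ext (by simpa using h2))

/-- Remark 3.3, algebra (ΛU₈, δ₈): nonzero solutions (tuples `Fin 15 → ℚˣ`,
coordinates `p 0 = p2`, `p 1 = p3`, `p 2 = p4`, `p 3 = p5`, `p 4 = p6`, `p 5 = p15`, `p 6 = p20`, `p 7 = p30`, `p 8 = p60`, `p 9 = p10`, `p 10 = p12`, `p 11 = p41`, `p 12 = p43`, `p 13 = p45`, `p 14 = p119`)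
form a group of order 1024 under componentwise multiplication in which every
element squares to the identity; hence it is isomorphic to (ℤ/2ℤ)^10. -/
theorem stmt_13 :
    ∃ H : Subgroup (Fin 15 → ℚˣ),
      (H : Set (Fin 15 → ℚˣ)) =
        {p : Fin 15 → ℚˣ | p 11 = p 9 ^ 3 * p 10 ∧
        p 12 = p 9 ^ 2 * p 10 ^ 2 ∧
        p 13 = p 9 * p 10 ^ 3 ∧
        p 14 = p 11 * p 12 * p 9 ^ 2 * p 10 ^ 3 ∧
        p 14 = p 9 ^ 12 ∧
        p 14 = p 10 ^ 10 ∧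
        p 14 = p 0 ^ 60 ∧
        p 14 = p 1 ^ 40 ∧
        p 14 = p 2 ^ 30 ∧
        p 14 = p 3 ^ 20 ∧
        p 14 = p 4 ^ 20 ∧
        p 14 = p 5 ^ 8 ∧
        p 14 = p 6 ^ 6 ∧
        p 14 = p 7 ^ 4 ∧
        p 14 = p 8 ^ 2} ∧
      Nat.card H = 1024 ∧
      (∀ x ∈ H, x * x = 1) ∧
      Nonempty (H ≃* Multiplicative (Fin 10 → ZMod 2)) := by
  refine ⟨f.range, ?_, ?_, ?_, ?_⟩
  · ext p
    simp only [MonoidHom.coe_range, Set.mem_range, Set.mem_setOf_eq]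
    constructor
    · rintro ⟨v, rfl⟩
      set a := Multiplicative.toAdd v with ha
      refine ⟨?_, ?_, ?_, ?_, ?_, ?_, ?_, ?_, ?_, ?_, ?_, ?_, ?_, ?_, ?_⟩
      · show e' (a 9) = (1:ℚˣ) ^ 3 * e' (a 9); rw [one_pow, one_mul]
      · show (1:ℚˣ) = (1:ℚˣ) ^ 2 * e' (a 9) ^ 2; rw [one_pow, one_mul, e'_sq]
      · show e' (a 9) = 1 * e' (a 9) ^ 3; rw [one_mul, e'_cube]
      · show (1:ℚˣ) = e' (a 9) * 1 * (1:ℚˣ) ^ 2 * e' (a 9) ^ 3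
        rw [mul_one, one_pow, mul_one, e'_cube, ← pow_two, e'_sq]
      · show (1:ℚˣ) = (1:ℚˣ) ^ 12; rw [one_pow]
      · exact (e'_pow_even (a 9) 5).symm
      · exact (e'_pow_even (a 0) 30).symm
      · exact (e'_pow_even (a 1) 20).symm
      · exact (e'_pow_even (a 2) 15).symm
      · exact (e'_pow_even (a 3) 10).symm
      · exact (e'_pow_even (a 4) 10).symm
      · exact (e'_pow_even (a 5) 4).symm
      · exact (e'_pow_even (a 6) 3).symm
      · exact (e'_pow_even (a 7) 2).symm
      · exact (e'_pow_even (a 8) 1).symm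
    · rintro ⟨h1, h2, h3, h4, h5, h6, h7, h8, h9, h10, h11, h12, h13, h14, h15⟩
      have e1 : p 9 ^ 5 * p 9 ^ 7 = p 10 ^ 6 * p 9 ^ 7 := by
        have h' : p 9 ^ 12 = p 9 ^ 3 * p 10 * (p 9 ^ 2 * p 10 ^ 2) * p 9 ^ 2 * p 10 ^ 3 := by
          rw [← h1, ← h2, ← h5]; exact h4
        calc p 9 ^ 5 * p 9 ^ 7 = p 9 ^ 12 := by rw [← pow_add]
          _ = p 9 ^ 3 * p 10 * (p 9 ^ 2 * p 10 ^ 2) * p 9 ^ 2 * p 10 ^ 3 := h'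
          _ = p 10 ^ 6 * p 9 ^ 7 := by
              apply Units.ext
              simp only [Units.val_mul, Units.val_pow_eq_pow_val]
              ring
      have e2 : p 9 ^ 5 = p 10 ^ 6 := mul_right_cancel e1
      have e3 : p 9 ^ 12 = p 10 ^ 10 := h5.symm.trans h6
      have a1 : p 9 ^ 60 = p 10 ^ 72 := by
        have := congrArg (· ^ 12) e2
        simpa [← pow_mul] using this
      have a2 : p 9 ^ 60 = p 10 ^ 50 := by
        have := congrArg (· ^ 5) e3
        simpa [← pow_mul] using this
      have a3 : p 10 ^ 72 = p 10 ^ 50 := a1.symm.trans a2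
      have a4 : p 10 ^ 50 * p 10 ^ 22 = p 10 ^ 50 * 1 := by
        rw [mul_one, ← pow_add]
        exact a3
      have h22 : p 10 ^ 22 = 1 := mul_left_cancel a4
      have hp10 : p 10 = 1 ∨ p 10 = -1 := pm_of_pow _ 22 (by norm_num) h22
      have h10sq : p 10 ^ 2 = 1 := by rcases hp10 with h | h <;> rw [h] <;> norm_num
      have h95 : p 9 ^ 5 = 1 := by
        rw [e2, show (6:ℕ) = 2*3 from rfl, pow_mul, h10sq, one_pow]
      have hp9 : p 9 = 1 := by
        rcases pm_of_pow _ 5 (by norm_num) h95 with h | h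
        · exact h
        · exfalso
          rw [h] at h95
          have hq : ((-1 : ℚ)) ^ 5 = 1 := by
            have := congrArg Units.val h95
            simpa using this
          norm_num at hq
      have h14one : p 14 = 1 := by rw [h5, hp9, one_pow]
      have hp10' : p 10 ^ 3 = p 10 := by
        rw [show (3:ℕ) = 2+1 from rfl, pow_add, h10sq, one_mul, pow_one]
      have h11' : p 11 = p 10 := by rw [h1, hp9, one_pow, one_mul]
      have h12' : p 12 = 1 := by rw [h2, hp9, one_pow, one_mul, h10sq]
      have h13' : p 13 = p 10 := by rw [h3, hp9, one_mul, hp10']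
      have pm : ∀ (i : Fin 15) (n : ℕ), n ≠ 0 → p 14 = p i ^ n → p i = 1 ∨ p i = -1 := by
        intro i n hn h
        exact pm_of_pow _ n hn (by rw [← h, h14one])
      refine ⟨Multiplicative.ofAdd ![gg (p 0), gg (p 1), gg (p 2), gg (p 3), gg (p 4),
        gg (p 5), gg (p 6), gg (p 7), gg (p 8), gg (p 10)], ?_⟩
      funext i
      fin_cases i
      · exact e'_gg (pm 0 60 (by norm_num) h7)
      · exact e'_gg (pm 1 40 (by norm_num) h8)
      · exact e'_gg (pm 2 30 (by norm_num) h9)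
      · exact e'_gg (pm 3 20 (by norm_num) h10)
      · exact e'_gg (pm 4 20 (by norm_num) h11)
      · exact e'_gg (pm 5 8 (by norm_num) h12)
      · exact e'_gg (pm 6 6 (by norm_num) h13)
      · exact e'_gg (pm 7 4 (by norm_num) h14)
      · exact e'_gg (pm 8 2 (by norm_num) h15)
      · exact hp9.symm
      · exact e'_gg hp10
      · show e' (gg (p 10)) = p 11
        rw [h11']; exact e'_gg hp10
      · exact h12'.symm
      · show e' (gg (p 10)) = p 13
        rw [h13']; exact e'_gg hp10
      · exact h14one.symm
  · have hc := Nat.card_congr (MonoidHom.ofInjective f_inj).toEquiv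
    rw [← hc]
    have h2 : Nat.card (Multiplicative (Fin 10 → ZMod 2)) = Nat.card (Fin 10 → ZMod 2) :=
      Nat.card_congr Multiplicative.toAdd
    rw [h2]
    simp only [Nat.card_eq_fintype_card, Fintype.card_fun, ZMod.card]
    norm_num
  · rintro x ⟨v, rfl⟩
    rw [← map_mul]
    have hv : v * v = 1 := by
      have h0 : Multiplicative.toAdd (v * v)
          = Multiplicative.toAdd (1 : Multiplicative (Fin 10 → ZMod 2)) := by
        rw [toAdd_mul, toAdd_one]
        funext j
        exact zadd _
      exact Multiplicative.toAdd.injective h0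
    rw [hv, map_one]
  · exact ⟨(MonoidHom.ofInjective f_inj).symm⟩
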